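/- arXiv:1905.12999 — 4 statements merged into one kernel-verified Lean document; each statement's English description precedes it below -/
import Mathlib

section
/- Let n = 2r be even, let 1 ≤ q ≤ n/2, and let α : {1,…,k} → I_n be a function such that every block of ker α has even size. Then Ψ_α = Ψ_{α(1)}⋯Ψ_{α(k)} equals either I or −I, where I is the 2^r × 2^r identity matrix. -/
/-!
Every `ψ_j` squares to `1`, and distinct `ψ_j` anticommute: the tensor factors of `ψ_j` and
`ψ_{j'}` commute except at position `min (j % r) (j' % r)`, where two distinct Pauli matrices
meet. Unfolding each `Ψ_R`, `Ψ_α` is `i^{k⌊q/2⌋}` times a word in the `ψ_j` in which every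
letter `j` occurs an even number of times, since the `x` with `j ∈ α x` form a union of fibers
of `α`. Bringing the two copies of a letter together and cancelling them costs only signs, so
the word is `±1`. Finally `k`, a sum of fiber sizes, is even, so `i^{k⌊q/2⌋} = ±1`.
-/

open Matrix

/-- The three Pauli matrices. -/
def pauli1 : Matrix (Fin 2) (Fin 2) ℂ := !![0, 1; 1, 0]
def pauli2 : Matrix (Fin 2) (Fin 2) ℂ := !![0, -Complex.I; Complex.I, 0]
def pauli3 : Matrix (Fin 2) (Fin 2) ℂ := !![1, 0; 0, -1]

/-- The Majorana fermion `ψ_j` (0-based index `j : Fin (2*r)`), realized as an `r`-fold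
Kronecker product of Pauli matrices, acting on `(Fin r → Fin 2)`-indexed space of size `2^r`.
For `j < r` it is `σ₃^{⊗ j} ⊗ σ₁ ⊗ 1^{⊗ (r-j-1)}`, for `j = r + j'` it is
`σ₃^{⊗ j'} ⊗ σ₂ ⊗ 1^{⊗ (r-j'-1)}`. -/
def majorana (r : ℕ) (j : Fin (2 * r)) :
    Matrix (Fin r → Fin 2) (Fin r → Fin 2) ℂ := fun x y =>
  ∏ i : Fin r,
    (if (i : ℕ) < (j : ℕ) % r then pauli3
     else if (i : ℕ) = (j : ℕ) % r then (if (j : ℕ) < r then pauli1 else pauli2)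
     else (1 : Matrix (Fin 2) (Fin 2) ℂ)) (x i) (y i)

/-- The index set `I_n`: subsets of `{0,…,n-1}` of size `q`, i.e. strictly increasing
`q`-tuples with entries in `{1,…,n}`. -/
abbrev MajIdx (n q : ℕ) := {s : Finset (Fin n) // s.card = q}

/-- `Ψ_R = i^{⌊q/2⌋} ψ_{i_1} ⋯ ψ_{i_q}` where `R = {i_1 < ⋯ < i_q}`. -/
noncomputable def PsiOp (r q : ℕ) (R : MajIdx (2 * r) q) :
    Matrix (Fin r → Fin 2) (Fin r → Fin 2) ℂ :=
  Complex.I ^ (q / 2) • ((R.1.sort (· ≤ ·)).map (majorana r)).prod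

/-- The normalized trace `tr = 2^{-r} Tr`. -/
noncomputable def ntr {r : ℕ} (A : Matrix (Fin r → Fin 2) (Fin r → Fin 2) ℂ) : ℂ :=
  ((2 : ℂ) ^ r)⁻¹ * A.trace

/-- `Ψ_α = Ψ_{α(1)} ⋯ Ψ_{α(k)}`. -/
noncomputable def PsiProd (r q : ℕ) {k : ℕ} (α : Fin k → MajIdx (2 * r) q) :
    Matrix (Fin r → Fin 2) (Fin r → Fin 2) ℂ :=
  ((List.finRange k).map (fun x => PsiOp r q (α x))).prod

/-- A pair partition of `{1,…,k}`, encoded as a fixed-point-free involution: the blocks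
are the pairs `{x, f x}`. -/
def IsPairing {k : ℕ} (f : Fin k → Fin k) : Prop :=
  Function.Involutive f ∧ ∀ x, f x ≠ x

instance {k : ℕ} : DecidablePred (IsPairing (k := k)) := fun f =>
  decidable_of_iff ((∀ x, f (f x) = x) ∧ ∀ x, f x ≠ x) Iff.rfl

/-- The set of crossings of a pair partition encoded by the involution `f`: each crossing
pair of blocks `{v₁ < v₂}, {w₁ < w₂}` with `v₁ < w₁ < v₂ < w₂` is recorded once, as
`(v₁, w₁)`. -/
def crossPairs {k : ℕ} (f : Fin k → Fin k) : Finset (Fin k × Fin k) :=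
  Finset.univ.filter fun p => p.1 < p.2 ∧ p.2 < f p.1 ∧ f p.1 < f p.2

/-- The number of crossings `cr(π)` of a pair partition. -/
def crN {k : ℕ} (f : Fin k → Fin k) : ℕ := (crossPairs f).card

/-- The partition (as a setoid, i.e. an equivalence relation) generated by the
pairs `{x, f x}`; for a fixed-point-free involution `f` this is the associated
pair partition. -/
def genSetoid {k : ℕ} (f : Fin k → Fin k) : Setoid (Fin k) :=
  sInf {s : Setoid (Fin k) | ∀ x, s (f x) x}

namespace Matrix

variable {ι n R : Type*} [Fintype ι] [CommRing R]

def piKron (A : ι → Matrix n n R) : Matrix (ι → n) (ι → n) R :=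
  fun x y => ∏ i, A i (x i) (y i)

theorem piKron_one [DecidableEq n] : piKron (fun _ : ι => (1 : Matrix n n R)) = 1 := by
  ext x y
  simp only [piKron, one_apply, Finset.prod_boole, Finset.mem_univ, true_implies, funext_iff]

variable [Fintype n] [DecidableEq ι]

theorem piKron_mul (A B : ι → Matrix n n R) :
    piKron A * piKron B = piKron fun i => A i * B i := by
  ext x y
  simp only [piKron, mul_apply, ← Finset.prod_mul_distrib]
  exact (Fintype.prod_sum fun i c => A i (x i) c * B i c (y i)).symm

theorem piKron_anticomm (A B : ι → Matrix n n R) (i₀ : ι)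
    (h₀ : A i₀ * B i₀ = -(B i₀ * A i₀)) (h : ∀ i ≠ i₀, Commute (A i) (B i)) :
    piKron A * piKron B = -(piKron B * piKron A) := by
  ext x y
  have hcomm : ∀ i ∈ ({i₀}ᶜ : Finset ι), (A i * B i) (x i) (y i) = (B i * A i) (x i) (y i) :=
    fun i hi => by rw [(h i (by simpa using hi)).eq]
  simp only [piKron_mul, piKron, neg_apply, Fintype.prod_eq_mul_prod_compl i₀, h₀,
    Finset.prod_congr rfl hcomm, neg_mul]

end Matrix

section SignedWords

variable {α M : Type*} [DecidableEq α] [Monoid M] [HasDistribNeg M] {e : α → M}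

theorem exists_mul_prod_map_eq_neg_one_pow_mul_prod_erase
    (hsq : ∀ a, e a * e a = 1) (hanti : ∀ a b, a ≠ b → e a * e b = -(e b * e a))
    {a : α} {L : List α} (ha : a ∈ L) :
    ∃ m : ℕ, e a * (L.map e).prod = (-1) ^ m * ((L.erase a).map e).prod := by
  induction L with
  | nil => cases ha
  | cons b T ih =>
    by_cases hab : a = b
    · subst hab
      exact ⟨0, by simp [← mul_assoc, hsq]⟩
    · obtain ⟨m, hm⟩ := ih ((List.mem_cons.mp ha).resolve_left hab)
      refine ⟨m + 1, ?_⟩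
      rw [List.erase_cons_tail (by simpa using Ne.symm hab)]
      simp only [List.map_cons, List.prod_cons, ← mul_assoc, hanti a b hab, neg_mul]
      rw [mul_assoc, hm, ← mul_assoc, ((Commute.neg_one_right (e b)).pow_right m).eq, pow_succ]
      simp only [mul_assoc, mul_neg, mul_one, neg_mul]

theorem exists_prod_map_eq_neg_one_pow_of_even_count
    (hsq : ∀ a, e a * e a = 1) (hanti : ∀ a b, a ≠ b → e a * e b = -(e b * e a))
    {L : List α} (hL : ∀ a, Even (L.count a)) :
    ∃ m : ℕ, (L.map e).prod = (-1) ^ m := by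
  induction hlen : L.length using Nat.strong_induction_on generalizing L with
  | _ N ih =>
  cases L with
  | nil => exact ⟨0, by simp⟩
  | cons a T =>
    have haT : a ∈ T := by
      have := hL a
      rw [List.count_cons_self] at this
      exact List.count_pos_iff.mp (Nat.pos_of_ne_zero fun h0 => by simp [h0] at this)
    have hperm : (a :: T).Perm (a :: a :: T.erase a) := (List.perm_cons_erase haT).cons a
    have hL' : ∀ b, Even ((T.erase a).count b) := fun b => by
      have := hperm.count_eq b ▸ hL b
      simp only [List.count_cons] at this
      split_ifs at this <;> simpa [Nat.even_add_one] using this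
    obtain ⟨m, hm⟩ := exists_mul_prod_map_eq_neg_one_pow_mul_prod_erase hsq hanti haT
    obtain ⟨m', hm'⟩ := ih _ (by simp [← hlen, List.length_erase_of_mem haT]) hL' rfl
    exact ⟨m + m', by rw [List.map_cons, List.prod_cons, hm, hm', pow_add]⟩

end SignedWords

theorem pauli1_mul_self : pauli1 * pauli1 = 1 := by
  simp [pauli1, one_fin_two]

theorem pauli2_mul_self : pauli2 * pauli2 = 1 := by
  simp [pauli2, one_fin_two]

theorem pauli3_mul_self : pauli3 * pauli3 = 1 := by
  simp [pauli3, one_fin_two]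

theorem pauli1_mul_pauli2 : pauli1 * pauli2 = -(pauli2 * pauli1) := by
  simp [pauli1, pauli2]

theorem pauli1_mul_pauli3 : pauli1 * pauli3 = -(pauli3 * pauli1) := by
  simp [pauli1, pauli3]

theorem pauli2_mul_pauli3 : pauli2 * pauli3 = -(pauli3 * pauli2) := by
  simp [pauli2, pauli3]

section Majorana

variable {r : ℕ}

def majoranaFactor (r : ℕ) (j : Fin (2 * r)) (i : Fin r) : Matrix (Fin 2) (Fin 2) ℂ :=
  if (i : ℕ) < (j : ℕ) % r then pauli3
  else if (i : ℕ) = (j : ℕ) % r then (if (j : ℕ) < r then pauli1 else pauli2)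
  else 1

theorem majorana_eq_piKron (j : Fin (2 * r)) : majorana r j = piKron (majoranaFactor r j) :=
  rfl

theorem majoranaFactor_of_lt {j : Fin (2 * r)} {i : Fin r} (h : (i : ℕ) < j % r) :
    majoranaFactor r j i = pauli3 :=
  if_pos h

theorem majoranaFactor_of_eq {j : Fin (2 * r)} {i : Fin r} (h : (i : ℕ) = j % r) :
    majoranaFactor r j i = if (j : ℕ) < r then pauli1 else pauli2 := by
  simp [majoranaFactor, h]

theorem majoranaFactor_of_gt {j : Fin (2 * r)} {i : Fin r} (h : (j : ℕ) % r < i) :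
    majoranaFactor r j i = 1 := by
  simp [majoranaFactor, h.not_gt, h.ne']

theorem majoranaFactor_mul_self (j : Fin (2 * r)) (i : Fin r) :
    majoranaFactor r j i * majoranaFactor r j i = 1 := by
  unfold majoranaFactor
  split_ifs <;> simp only [pauli1_mul_self, pauli2_mul_self, pauli3_mul_self, mul_one]

theorem majorana_mul_self (j : Fin (2 * r)) : majorana r j * majorana r j = 1 := by
  simp only [majorana_eq_piKron, piKron_mul, majoranaFactor_mul_self, piKron_one]

theorem lt_iff_not_lt_of_mod_eq {j₁ j₂ : ℕ} (h₁ : j₁ < 2 * r) (h₂ : j₂ < 2 * r) (hne : j₁ ≠ j₂)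
    (hmod : j₁ % r = j₂ % r) : j₁ < r ↔ ¬ j₂ < r := by
  have key : ∀ j < 2 * r, j % r = if j < r then j else j - r := fun j hj => by
    split_ifs with hjr
    · exact Nat.mod_eq_of_lt hjr
    · rw [Nat.mod_eq_sub_mod (not_lt.mp hjr), Nat.mod_eq_of_lt (by omega)]
  rw [key j₁ h₁, key j₂ h₂] at hmod
  split_ifs at hmod <;> omega

theorem majoranaFactor_anticomm_at_min {j₁ j₂ : Fin (2 * r)} (h : j₁ ≠ j₂) {i : Fin r}
    (hi : (i : ℕ) = min (j₁ % r) (j₂ % r)) :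
    majoranaFactor r j₁ i * majoranaFactor r j₂ i =
      -(majoranaFactor r j₂ i * majoranaFactor r j₁ i) := by
  wlog hle : (j₁ : ℕ) % r ≤ j₂ % r generalizing j₁ j₂
  · rw [this h.symm (by rwa [min_comm]) (by omega), neg_neg]
  rw [min_eq_left hle] at hi
  rcases hle.lt_or_eq with hlt | heq
  · rw [majoranaFactor_of_eq hi, majoranaFactor_of_lt (hi ▸ hlt)]
    split_ifs
    exacts [pauli1_mul_pauli3, pauli2_mul_pauli3]
  · have hhalf := lt_iff_not_lt_of_mod_eq j₁.isLt j₂.isLt (Fin.val_ne_of_ne h) heq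
    rw [majoranaFactor_of_eq hi, majoranaFactor_of_eq (hi.trans heq)]
    split_ifs <;> first | tauto | rw [pauli1_mul_pauli2, neg_neg] | exact pauli1_mul_pauli2

theorem majoranaFactor_commute_of_ne_min {j₁ j₂ : Fin (2 * r)} {i : Fin r}
    (hi : (i : ℕ) ≠ min (j₁ % r) (j₂ % r)) :
    Commute (majoranaFactor r j₁ i) (majoranaFactor r j₂ i) := by
  rcases hi.lt_or_gt with hlt | hgt
  · rw [majoranaFactor_of_lt (lt_min_iff.mp hlt).1, majoranaFactor_of_lt (lt_min_iff.mp hlt).2]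
  · rcases min_lt_iff.mp hgt with h₁ | h₂
    · rw [majoranaFactor_of_gt h₁]
      exact Commute.one_left _
    · rw [majoranaFactor_of_gt h₂]
      exact Commute.one_right _

theorem majorana_anticomm {j₁ j₂ : Fin (2 * r)} (h : j₁ ≠ j₂) :
    majorana r j₁ * majorana r j₂ = -(majorana r j₂ * majorana r j₁) := by
  have hr : 0 < r := by omega
  let i₀ : Fin r := ⟨min (j₁ % r) (j₂ % r), (min_le_left _ _).trans_lt (Nat.mod_lt _ hr)⟩
  exact piKron_anticomm _ _ i₀ (majoranaFactor_anticomm_at_min h rfl)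
    fun i hi => majoranaFactor_commute_of_ne_min fun h' => hi (Fin.ext h')

end Majorana

theorem even_card_filter_comp_of_even_fibers {ι β : Type*} [Fintype ι] [DecidableEq β]
    {f : ι → β} (hf : ∀ b, Even (Finset.univ.filter fun x => f x = b).card)
    (p : β → Prop) [DecidablePred p] :
    Even (Finset.univ.filter fun x => p (f x)).card := by
  rw [Finset.card_eq_sum_card_fiberwise fun x _ => Finset.mem_image_of_mem f (Finset.mem_univ x)]
  refine Finset.even_sum _ fun b _ => ?_
  rw [Finset.filter_filter]
  by_cases hb : p b
  · rw [Finset.filter_congr fun x _ => and_iff_right_of_imp fun hx : f x = b => hx ▸ hb]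
    exact hf b
  · rw [Finset.filter_false_of_mem fun x _ ⟨hx, hxb⟩ => hb (hxb ▸ hx), Finset.card_empty]
    exact ⟨0, rfl⟩

theorem Finset.count_sort {α : Type*} [DecidableEq α] (r : α → α → Prop) [DecidableRel r]
    [IsTrans α r] [Std.Antisymm r] [Std.Total r] (s : Finset α) (a : α) :
    (s.sort r).count a = if a ∈ s then 1 else 0 := by
  rw [← Multiset.coe_count, Finset.sort_eq, Multiset.count_eq_of_nodup s.nodup]
  rfl

def psiWord (r q : ℕ) {k : ℕ} (α : Fin k → MajIdx (2 * r) q) : List (Fin (2 * r)) :=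
  ((List.finRange k).map fun x => (α x).1.sort (· ≤ ·)).flatten

theorem PsiProd_eq_smul_prod_psiWord (r q : ℕ) {k : ℕ} (α : Fin k → MajIdx (2 * r) q) :
    PsiProd r q α = (Complex.I ^ (q / 2)) ^ k • ((psiWord r q α).map (majorana r)).prod := by
  have hpull := List.smul_prod ((List.finRange k).map fun x =>
    (((α x).1.sort (· ≤ ·)).map (majorana r)).prod) (Complex.I ^ (q / 2))
  rw [List.length_map, List.length_finRange, List.map_map] at hpull
  rw [PsiProd, psiWord, List.map_flatten, List.prod_flatten, List.map_map, List.map_map]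
  exact hpull.symm

theorem count_psiWord (r q : ℕ) {k : ℕ} (α : Fin k → MajIdx (2 * r) q) (a : Fin (2 * r)) :
    (psiWord r q α).count a = (Finset.univ.filter fun x => a ∈ (α x).1).card := by
  simp only [psiWord, List.count_flatten, List.map_map, Finset.card_filter, Fin.sum_univ_def,
    Function.comp_def, Finset.count_sort]

theorem PsiProd_even_fibers_general (r q : ℕ) {k : ℕ}
    (α : Fin k → MajIdx (2 * r) q)
    (hα : ∀ R : MajIdx (2 * r) q, Even ((Finset.univ.filter fun x => α x = R).card)) :
    PsiProd r q α = 1 ∨ PsiProd r q α = -1 := by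
  obtain ⟨t, ht⟩ : Even k := by
    simpa using even_card_filter_comp_of_even_fibers hα fun _ => True
  have hscalar : (Complex.I ^ (q / 2)) ^ k = (-1) ^ (q / 2 * t) := by
    rw [ht, ← two_mul, ← pow_mul, mul_left_comm, pow_mul, Complex.I_sq]
  have hcount (a : Fin (2 * r)) : Even ((psiWord r q α).count a) := by
    simpa only [count_psiWord] using even_card_filter_comp_of_even_fibers hα (a ∈ ·.1)
  obtain ⟨m, hm⟩ := exists_prod_map_eq_neg_one_pow_of_even_count majorana_mul_self
    (fun _ _ => majorana_anticomm) hcount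
  rw [PsiProd_eq_smul_prod_psiWord, hscalar, hm]
  rcases neg_one_pow_eq_or ℂ (q / 2 * t) with h | h <;>
    rcases neg_one_pow_eq_or (Matrix (Fin r → Fin 2) (Fin r → Fin 2) ℂ) m with h' | h' <;>
    simp [h, h']

/-- if every block of `ker α` (i.e. every nonempty fiber of `α`) has even
size, then `Ψ_α = Ψ_{α(1)} ⋯ Ψ_{α(k)}` is `I` or `−I`. -/
theorem PsiProd_even_fibers (r q : ℕ) (hq1 : 1 ≤ q) (hq2 : q ≤ r) {k : ℕ}
    (α : Fin k → MajIdx (2 * r) q)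
    (hα : ∀ R : MajIdx (2 * r) q, Even ((Finset.univ.filter fun x => α x = R).card)) :
    PsiProd r q α = 1 ∨ PsiProd r q α = -1 :=
  PsiProd_even_fibers_general r q α hα
end

section
/- Let 1 ≤ q ≤ n/2 with n even, let k be even, and let α : {1,…,k} → I_n. If π, σ ∈ P_2(k) are two pair partitions with π ≤ ker α and σ ≤ ker α, then (−1)^{q·cr(π) + Σ_{{V,W} crossing blocks of π} |α(V) ∩ α(W)|} = (−1)^{q·cr(σ) + Σ_{{V,W} crossing blocks of σ} |α(V) ∩ α(W)|}; that is, the sign in the trace formula does not depend on the choice of the pair partition below ker α. -/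
open Matrix

/-!
Fix any linear order on `I_n` and let `c(R, S) = q + |R ∩ S|` in `ZMod 2`, a symmetric form
vanishing on the diagonal. For a pairing `π ≤ ker α`, positions `i < j` with `α j < α i` lie in
different blocks, and two blocks `V, W` contain `#{(i, j) ∈ V × W | i < j}` such pairs, which is
odd exactly when they cross. So the exponent is congruent mod 2 to the inversion sum
`∑_{i < j, α j < α i} c(α i, α j)`, in which `π` does not appear.
-/

open Finset

theorem Function.Involutive.sum_eq_sum_filter_lt_add {ι M : Type*} [Fintype ι] [LinearOrder ι]
    [AddCommMonoid M] {f : ι → ι} (hf : Function.Involutive f)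
    (hfix : ∀ i, f i ≠ i) (H : ι → M) :
    ∑ i, H i = ∑ i with i < f i, (H i + H (f i)) := by
  rw [sum_add_distrib, ← sum_filter_add_sum_filter_not univ (fun i => i < f i)]
  congr 1
  refine sum_nbij' f f (fun i hi => ?_) (fun i hi => ?_) (fun i _ => hf i) (fun i _ => hf i)
    (fun i _ => by rw [hf i])
  · simp only [mem_filter, mem_univ, true_and, not_lt, hf i] at hi ⊢
    exact lt_of_le_of_ne hi (hfix i)
  · simp only [mem_filter, mem_univ, true_and, not_lt, hf i] at hi ⊢
    exact hi.le
abbrev Crosses {k : ℕ} (f : Fin k → Fin k) (i j : Fin k) : Prop :=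
  i < j ∧ j < f i ∧ f i < f j

theorem sum_crossPairs_add_sum_crossPairs_swap {M : Type*} [AddCommMonoid M] {k : ℕ}
    (f : Fin k → Fin k) (G : Fin k → Fin k → M) :
    ∑ p ∈ crossPairs f, G p.1 p.2 + ∑ p ∈ crossPairs f, G p.2 p.1
      = ∑ i, ∑ j, if Crosses f i j ∨ Crosses f j i then G i j else 0 := by
  rw [crossPairs, sum_filter, sum_filter, Fintype.sum_prod_type, Fintype.sum_prod_type_right,
    ← sum_add_distrib]
  refine sum_congr rfl fun i _ => ?_
  rw [← sum_add_distrib]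
  refine sum_congr rfl fun j _ => ?_
  by_cases hij : Crosses f i j
  · rw [if_pos hij, if_neg fun hji => lt_asymm hij.1 hji.1, if_pos (Or.inl hij), add_zero]
  · simp only [if_neg hij, zero_add, or_iff_right hij]

theorem sum_sum_ite_crosses_eq_sum_filter_lt {M : Type*} [AddCommMonoid M] {k : ℕ}
    (f : Fin k → Fin k) (G : Fin k → Fin k → M) :
    ∑ i, ∑ j, (if Crosses f i j ∨ Crosses f j i then G i j else 0)
      = ∑ i with i < f i, ∑ j with j < f j,
          if Crosses f i j ∨ Crosses f j i then G i j else 0 := by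
  rw [sum_filter]
  refine sum_congr rfl fun i _ => ?_
  rw [sum_filter]
  by_cases hi : i < f i
  · rw [if_pos hi]
    refine sum_congr rfl fun j _ => ?_
    by_cases hj : j < f j
    · rw [if_pos hj]
    · refine (if_neg ?_).trans (if_neg hj).symm
      rintro (⟨-, h₁, h₂⟩ | ⟨h₁, h₂, -⟩) <;> exact hj (h₁.trans h₂)
  · refine (sum_eq_zero fun j _ => if_neg ?_).trans (if_neg hi).symm
    rintro (⟨h₁, h₂, -⟩ | ⟨-, h₁, h₂⟩) <;> exact hi (h₁.trans h₂)

theorem IsPairing.crossing_parity {k : ℕ} {f : Fin k → Fin k} (hf : IsPairing f) {i j : Fin k}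
    (hi : i < f i) (hj : j < f j) (hij : i ≠ j) :
    ((if i < j then 1 else 0) + (if f i < j then 1 else 0) + (if i < f j then 1 else 0)
        + (if f i < f j then 1 else 0) : ZMod 2)
      = if Crosses f i j ∨ Crosses f j i then 1 else 0 := by
  have hfij : f i ≠ f j := hf.1.injective.ne hij
  have hfi_j : f i ≠ j := fun h => by
    have := hf.1 i; rw [h] at this hi; rw [this] at hj; exact lt_asymm hi hj
  have hfj_i : f j ≠ i := fun h => by
    have := hf.1 j; rw [h] at this hj; rw [this] at hi; exact lt_asymm hi hj
  rw [Fin.lt_def] at hi hj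
  rw [Ne, Fin.ext_iff] at hij hfij hfi_j hfj_i
  simp only [Crosses, Fin.lt_def]
  split_ifs <;> first | decide | omega

theorem IsPairing.sum_crossPairs_eq_sum_inversions {β : Type*} [LinearOrder β] {k : ℕ}
    {f : Fin k → Fin k} (hf : IsPairing f) (α : Fin k → β)
    (hα : ∀ x, α (f x) = α x) (c : β → β → ZMod 2) (hc : ∀ a b, c a b = c b a)
    (hc0 : ∀ a, c a a = 0) :
    ∑ p ∈ crossPairs f, c (α p.1) (α p.2)
      = ∑ p : Fin k × Fin k with p.1 < p.2 ∧ α p.2 < α p.1, c (α p.1) (α p.2) := by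
  set G : Fin k → Fin k → ZMod 2 := fun i j => if α j < α i then c (α i) (α j) else 0 with hG
  set L : Fin k → Fin k → ZMod 2 := fun i j => if i < j then 1 else 0 with hL
  have hGf (i j : Fin k) : G (f i) j = G i j ∧ G i (f j) = G i j := by simp [hG, hα]
  have hcG (i j : Fin k) : c (α i) (α j) = G i j + G j i := by
    rcases lt_trichotomy (α i) (α j) with h | h | h
    · simp [hG, h, h.not_gt, hc]
    · simp [hG, h, hc0]
    · simp [hG, h, h.not_gt]
  have hGX {i j : Fin k} (hi : i < f i) (hj : j < f j) :
      G i j * (L i j + L (f i) j + L i (f j) + L (f i) (f j))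
        = if Crosses f i j ∨ Crosses f j i then G i j else 0 := by
    rcases eq_or_ne i j with rfl | hij
    · simp [hG]
    · rw [hL, hf.crossing_parity hi hj hij, mul_ite, mul_one, mul_zero]
  calc ∑ p ∈ crossPairs f, c (α p.1) (α p.2)
      = ∑ p ∈ crossPairs f, G p.1 p.2 + ∑ p ∈ crossPairs f, G p.2 p.1 := by
        simp only [hcG, sum_add_distrib]
    _ = ∑ i with i < f i, ∑ j with j < f j,
          if Crosses f i j ∨ Crosses f j i then G i j else 0 := by
        rw [sum_crossPairs_add_sum_crossPairs_swap, sum_sum_ite_crosses_eq_sum_filter_lt]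
    _ = ∑ i with i < f i, ∑ j with j < f j,
          G i j * (L i j + L (f i) j + L i (f j) + L (f i) (f j)) :=
        sum_congr rfl fun i hi => sum_congr rfl fun j hj =>
          (hGX (mem_filter.1 hi).2 (mem_filter.1 hj).2).symm
    _ = ∑ i, ∑ j, G i j * L i j := by
        rw [hf.1.sum_eq_sum_filter_lt_add hf.2]
        refine sum_congr rfl fun i _ => ?_
        rw [← sum_add_distrib, hf.1.sum_eq_sum_filter_lt_add hf.2]
        refine sum_congr rfl fun j _ => ?_
        simp only [(hGf _ _).1, (hGf _ _).2]
        ring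
    _ = _ := by
        rw [sum_filter, Fintype.sum_prod_type]
        simp [hG, hL, ite_and]

theorem sign_independent_of_pairing_general {n q : ℕ}
    {k : ℕ}
    (f g : Fin k → Fin k) (hf : IsPairing f) (hg : IsPairing g)
    (α : Fin k → MajIdx n q) (hαf : ∀ x, α (f x) = α x) (hαg : ∀ x, α (g x) = α x) :
    (-1 : ℂ) ^ (q * crN f + ∑ p ∈ crossPairs f, ((α p.1).1 ∩ (α p.2).1).card)
      = (-1 : ℂ) ^ (q * crN g + ∑ p ∈ crossPairs g, ((α p.1).1 ∩ (α p.2).1).card) := by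
  let _ : LinearOrder (MajIdx n q) :=
    LinearOrder.lift' (Fintype.equivFin _) (Fintype.equivFin _).injective
  let c (R S : MajIdx n q) : ZMod 2 := q + #(R.1 ∩ S.1)
  have hc (R S : MajIdx n q) : c R S = c S R := by simp only [c, inter_comm]
  have hc0 (R : MajIdx n q) : c R R = 0 := by
    simp only [c, inter_self, R.2]; exact CharTwo.add_self_eq_zero _
  have hexp (h : Fin k → Fin k) :
      ((q * crN h + ∑ p ∈ crossPairs h, ((α p.1).1 ∩ (α p.2).1).card : ℕ) : ZMod 2)
        = ∑ p ∈ crossPairs h, c (α p.1) (α p.2) := by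
    push_cast [crN, c, sum_add_distrib, sum_const, nsmul_eq_mul]
    ring
  rw [neg_one_pow_eq_pow_mod_two, neg_one_pow_eq_pow_mod_two (R := ℂ) (q * crN g + _)]
  congr 1
  rw [← ZMod.natCast_eq_natCast_iff', hexp, hexp,
    hf.sum_crossPairs_eq_sum_inversions α hαf c hc hc0,
    hg.sum_crossPairs_eq_sum_inversions α hαg c hc hc0]

/-- the sign appearing in the trace formula does not depend on the choice
of the pair partition `π ≤ ker α`: for two pair partitions (encoded by fixed-point-free
involutions `f`, `g`) with `π ≤ ker α` and `σ ≤ ker α`, the two signs agree. -/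
theorem sign_independent_of_pairing {n q : ℕ} (hn : Even n) (hq1 : 1 ≤ q) (hq2 : 2 * q ≤ n)
    {k : ℕ} (hk : Even k)
    (f g : Fin k → Fin k) (hf : IsPairing f) (hg : IsPairing g)
    (α : Fin k → MajIdx n q) (hαf : ∀ x, α (f x) = α x) (hαg : ∀ x, α (g x) = α x) :
    (-1 : ℂ) ^ (q * crN f + ∑ p ∈ crossPairs f, ((α p.1).1 ∩ (α p.2).1).card)
      = (-1 : ℂ) ^ (q * crN g + ∑ p ∈ crossPairs g, ((α p.1).1 ∩ (α p.2).1).card) :=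
  sign_independent_of_pairing_general f g hf hg α hαf hαg
end

section
/- Let k be even and let θ = {T_1,…,T_m} be the partition of {1,…,k} into m consecutive intervals of sizes k_1,…,k_m with k = k_1+⋯+k_m. Let π ∈ P_2(k) satisfy π ∨ θ = 1_k and let π' ∈ P_2(k) satisfy π' ≤ θ. Then |π ∨ π'| ≤ k/2 − m + 1. -/
open Matrix

/-!
Let `V_σ` be the space of `ℚ`-valued functions on `{1,…,k}` that are constant on the blocks of
`σ`, so `dim V_σ = |σ|`. Joins become intersections, `V_{σ ∨ τ} = V_σ ∩ V_τ`, and if `υ ≤ σ, τ`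
then `V_σ + V_τ ⊆ V_υ`; Grassmann's formula thus gives `|σ| + |τ| ≤ |υ| + |σ ∨ τ|`. Applied to
`σ = π ∨ π'`, `τ = θ`, `υ = π'`, where `σ ∨ θ = 1_k`, `|θ| = m` and `|π'| = k/2`, this is the claim.
-/

namespace Setoid

variable {α : Type*} (K : Type*) [Field K]

def compatibleFunctions (s : Setoid α) : Submodule K (α → K) where
  carrier := {f | s ≤ ker f}
  zero_mem' _ _ _ := rfl
  add_mem' hf hg _ _ h := congrArg₂ (· + ·) (hf h) (hg h)
  smul_mem' a _ hf _ _ h := congrArg (a * ·) (hf h)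

variable {K}

theorem mem_compatibleFunctions {s : Setoid α} {f : α → K} :
    f ∈ s.compatibleFunctions K ↔ s ≤ ker f := Iff.rfl

theorem compatibleFunctions_antitone : Antitone (compatibleFunctions (α := α) K) :=
  fun _ _ hst _ hf => hst.trans hf

theorem compatibleFunctions_sup (s t : Setoid α) :
    (s ⊔ t).compatibleFunctions K = s.compatibleFunctions K ⊓ t.compatibleFunctions K := by
  ext f
  simp only [Submodule.mem_inf, mem_compatibleFunctions, sup_le_iff]

theorem compatibleFunctions_eq_range (s : Setoid α) :
    s.compatibleFunctions K = LinearMap.range (LinearMap.funLeft K K (Quotient.mk s)) := by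
  ext f
  refine ⟨fun hf => ⟨Quotient.lift f hf, rfl⟩, ?_⟩
  rintro ⟨g, rfl⟩ x y h
  exact congrArg g (Quotient.sound h)

theorem finrank_compatibleFunctions [Finite α] (s : Setoid α) :
    Module.finrank K (s.compatibleFunctions K) = Nat.card (Quotient s) := by
  have := Fintype.ofFinite (Quotient s)
  rw [compatibleFunctions_eq_range, LinearMap.finrank_range_of_inj
    (LinearMap.funLeft_injective_of_surjective _ _ _ Quotient.mk_surjective),
    Module.finrank_fintype_fun_eq_card, Nat.card_eq_fintype_card]

theorem card_quotient_add_card_quotient_le [Finite α] {s t u : Setoid α} (hus : u ≤ s)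
    (hut : u ≤ t) :
    Nat.card (Quotient s) + Nat.card (Quotient t) ≤
      Nat.card (Quotient u) + Nat.card (Quotient (s ⊔ t)) := by
  have hgrassmann := Submodule.finrank_sup_add_finrank_inf_eq
    (s.compatibleFunctions ℚ) (t.compatibleFunctions ℚ)
  have hsum_le : s.compatibleFunctions ℚ ⊔ t.compatibleFunctions ℚ ≤ u.compatibleFunctions ℚ :=
    sup_le (compatibleFunctions_antitone hus) (compatibleFunctions_antitone hut)
  have hmono := Submodule.finrank_mono hsum_le
  rw [← compatibleFunctions_sup] at hgrassmann
  simp only [finrank_compatibleFunctions] at hgrassmann hmono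
  omega

theorem ncard_classes (s : Setoid α) : s.classes.ncard = Nat.card (Quotient s) :=
  (Nat.card_congr s.quotientEquivClasses).symm

theorem card_quotient_top_le_one [Finite α] : Nat.card (Quotient (⊤ : Setoid α)) ≤ 1 :=
  Finite.card_le_one_iff_subsingleton.mpr ⟨Quotient.ind₂ fun _ _ => Quotient.sound trivial⟩

end Setoid

theorem genSetoid_iff {k : ℕ} {g : Fin k → Fin k} (hg : Function.Involutive g) {x y : Fin k} :
    genSetoid g x y ↔ x = y ∨ x = g y := by
  let pairs : Setoid (Fin k) :=
    { r := fun x y => x = y ∨ x = g y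
      iseqv := by
        constructor
        · exact fun x => Or.inl rfl
        · rintro x y (rfl | rfl)
          exacts [Or.inl rfl, Or.inr (hg _).symm]
        · rintro x y z (rfl | rfl) (rfl | rfl)
          exacts [Or.inl rfl, Or.inr rfl, Or.inr rfl, Or.inl (hg _)] }
  refine ⟨fun h => Setoid.sInf_iff.mp h pairs (show ∀ z, pairs (g z) z from fun _ => Or.inr rfl),
    ?_⟩
  rintro (rfl | rfl)
  · exact (genSetoid g).refl _
  · exact Setoid.sInf_iff.mpr fun s hs => hs _

theorem card_quotient_genSetoid_mul_two {k : ℕ} {g : Fin k → Fin k} (hg : IsPairing g) :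
    Nat.card (Quotient (genSetoid g)) * 2 = k := by
  classical
  have := Fintype.ofFinite (Quotient (genSetoid g))
  have hfiber : ∀ q : Quotient (genSetoid g),
      (Finset.univ.filter fun y => Quotient.mk _ y = q).card = 2 := by
    refine Quotient.ind fun x => ?_
    have hclass : (Finset.univ.filter fun y => Quotient.mk (genSetoid g) y = Quotient.mk _ x) =
        {x, g x} := by
      ext y
      simp [Quotient.eq, genSetoid_iff hg.1]
    rw [hclass]
    exact Finset.card_pair (hg.2 x).symm
  have hsum := Finset.card_eq_sum_card_fiberwise (f := Quotient.mk (genSetoid g))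
    (s := Finset.univ) (t := Finset.univ) fun _ _ => Finset.mem_univ _
  simp only [Finset.card_univ, Fintype.card_fin, hfiber, Finset.sum_const, smul_eq_mul] at hsum
  rw [Nat.card_eq_fintype_card, ← hsum]

theorem join_block_count_le_general {k m : ℕ}
    (c : Fin k → Fin m) (hcs : Function.Surjective c)
    (f g : Fin k → Fin k) (hg : IsPairing g)
    (hjoin : genSetoid f ⊔ Setoid.ker c = ⊤)
    (hg' : ∀ x, c (g x) = c x) :
    (((genSetoid f ⊔ genSetoid g).classes.ncard : ℤ))
      ≤ ((k / 2 : ℕ) : ℤ) - (m : ℤ) + 1 := by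
  have hgc : genSetoid g ≤ Setoid.ker c := sInf_le hg'
  have hsemimod := Setoid.card_quotient_add_card_quotient_le
    (le_sup_right : genSetoid g ≤ genSetoid f ⊔ genSetoid g) hgc
  have htop : genSetoid f ⊔ genSetoid g ⊔ Setoid.ker c = ⊤ := by
    rw [sup_assoc, sup_eq_right.mpr hgc, hjoin]
  have hm : Nat.card (Quotient (Setoid.ker c)) = m := by
    rw [Nat.card_congr (Setoid.quotientKerEquivOfSurjective c hcs), Nat.card_fin]
  rw [htop, hm] at hsemimod
  have hone := Setoid.card_quotient_top_le_one (α := Fin k)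
  have hpairs := card_quotient_genSetoid_mul_two hg
  rw [Setoid.ncard_classes]
  omega

/-- if `θ` is the partition of `{1,…,k}` into `m` consecutive intervals
(encoded as the kernel of a monotone surjection `c : Fin k → Fin m`), `π ∈ P₂(k)`
satisfies `π ∨ θ = 1_k` and `π' ∈ P₂(k)` satisfies `π' ≤ θ`, then
`|π ∨ π'| ≤ k/2 − m + 1`. -/
theorem join_block_count_le {k m : ℕ} (hk : Even k)
    (c : Fin k → Fin m) (hc : Monotone c) (hcs : Function.Surjective c)
    (f g : Fin k → Fin k) (hf : IsPairing f) (hg : IsPairing g)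
    (hjoin : genSetoid f ⊔ Setoid.ker c = ⊤)
    (hg' : ∀ x, c (g x) = c x) :
    (((genSetoid f ⊔ genSetoid g).classes.ncard : ℤ))
      ≤ ((k / 2 : ℕ) : ℤ) - (m : ℤ) + 1 :=
  join_block_count_le_general c hcs f g hg hjoin hg'
end

section
/- Let k ≥ 2 be even and let θ = {T_1,…,T_m} be the partition of {1,…,k} into m consecutive intervals of sizes k_1,…,k_m with k = k_1+⋯+k_m. Let π ∈ P_2(k) satisfy π ∨ θ = 1_k, let π' ∈ P_2(k) satisfy π' ≤ θ, and assume |π ∨ π'| = k/2 − m + 1. If moreover every block of π meets two distinct intervals of θ (i.e., no block of π is contained in a single T_i), then there exists an index i such that the interval T_i has exactly two elements. -/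
open Matrix

/-!
Suppose every interval of `θ` had size `≠ 2`. Since `π'` pairs points inside intervals, every
interval has even size, hence size at least `4`, so `4m ≤ k`. Now count the nonempty cells
`B ∩ T_i` of blocks `B` of `σ = π ∨ π'` against intervals. Every block meets at least two
intervals, because a block of `π` crosses between intervals, and every cell holds at least two
points, because it is closed under `π'`. Hence `4 |σ| ≤ k`, which contradicts
`|σ| = k/2 − m + 1` together with `4m ≤ k`.
-/

open Finset Function

theorem Finset.even_card_of_involutive {α : Type*} {g : α → α} (hg : Involutive g)
    (hfree : ∀ a, g a ≠ a) {s : Finset α} (hs : ∀ a ∈ s, g a ∈ s) : Even #s := by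
  rw [← ZMod.natCast_eq_zero_iff_even, card_eq_sum_ones, Nat.cast_sum, Nat.cast_one]
  exact sum_involution (fun a _ => g a) (fun _ _ => by decide) (fun a _ _ => hfree a) hs
    (fun a _ => hg a)

theorem Finset.two_mul_card_image_le_card {α β : Type*} [DecidableEq β] (s : Finset α)
    (φ : α → β) (h : ∀ x ∈ s, ∃ y ∈ s, y ≠ x ∧ φ y = φ x) : 2 * #(s.image φ) ≤ #s := by
  classical
  refine mul_card_image_le_card s 2 fun b hb => ?_
  obtain ⟨x, hx, rfl⟩ := mem_image.mp hb
  obtain ⟨y, hy, hyx, hφ⟩ := h x hx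
  calc 2 = #{y, x} := (card_pair hyx).symm
    _ ≤ _ := card_le_card <| by simp [insert_subset_iff, hx, hy, hφ]

section Incidence

variable {α β γ : Type*} [Fintype α] [DecidableEq β] [DecidableEq γ] (p : α → β) (q : α → γ)

theorem two_mul_card_le_card_image_prod [Fintype β] (hp : Surjective p) {f : α → α}
    (hfp : ∀ x, p (f x) = p x) (hfq : ∀ x, q (f x) ≠ q x) :
    2 * Fintype.card β ≤ #(univ.image fun x => (p x, q x)) := by
  have hfst : (univ.image fun x => (p x, q x)).image Prod.fst = univ := by
    simpa [image_image, comp_def] using image_univ_of_surjective hp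
  rw [← card_univ, ← hfst]
  refine two_mul_card_image_le_card _ _ fun _ hx => ?_
  obtain ⟨x, -, rfl⟩ := mem_image.mp hx
  exact ⟨(p (f x), q (f x)), mem_image_of_mem _ (mem_univ _),
    fun h => hfq x (congrArg Prod.snd h), hfp x⟩

theorem two_mul_card_image_prod_le_card {g : α → α} (hgp : ∀ x, p (g x) = p x)
    (hgq : ∀ x, q (g x) = q x) (hg : ∀ x, g x ≠ x) :
    2 * #(univ.image fun x => (p x, q x)) ≤ Fintype.card α :=
  two_mul_card_image_le_card univ _ fun x _ =>
    ⟨g x, mem_univ _, hg x, by rw [hgp, hgq]⟩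

end Incidence

theorem four_mul_card_le_card_of_even_fibers {α γ : Type*} [Fintype α] [Fintype γ]
    [DecidableEq γ] (q : α → γ) (hq : Surjective q) (heven : ∀ i, Even #{x | q x = i})
    (hne : ∀ i, #{x | q x = i} ≠ 2) : 4 * Fintype.card γ ≤ Fintype.card α := by
  rw [← card_univ, ← card_univ, ← image_univ_of_surjective hq]
  refine mul_card_image_le_card univ 4 fun i _ => ?_
  obtain ⟨x, rfl⟩ := hq i
  have hpos : 0 < #{y | q y = q x} := card_pos.mpr ⟨x, by simp⟩
  obtain ⟨r, hr⟩ := heven (q x)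
  have := hne (q x)
  omega

theorem genSetoid_apply_self {k : ℕ} (f : Fin k → Fin k) (x : Fin k) : genSetoid f (f x) x :=
  fun _ hr => hr x

theorem exists_interval_of_size_two_general {k m : ℕ}
    (c : Fin k → Fin m) (hcs : Function.Surjective c)
    (f g : Fin k → Fin k) (hg : IsPairing g)
    (hg' : ∀ x, c (g x) = c x)
    (hmax : (((genSetoid f ⊔ genSetoid g).classes.ncard : ℤ))
      = ((k / 2 : ℕ) : ℤ) - (m : ℤ) + 1)
    (hcross : ∀ x, c (f x) ≠ c x) :
    ∃ i : Fin m, (Finset.univ.filter (fun x : Fin k => c x = i)).card = 2 := by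
  classical
  by_contra! hno
  set S := genSetoid f ⊔ genSetoid g
  have hfS (x : Fin k) : S (f x) x := (le_sup_left : genSetoid f ≤ S) (genSetoid_apply_self f x)
  have hgS (x : Fin k) : S (g x) x := (le_sup_right : genSetoid g ≤ S) (genSetoid_apply_self g x)
  have hmk {h : Fin k → Fin k} (hh : ∀ x, S (h x) x) (x : Fin k) :
      Quotient.mk S (h x) = Quotient.mk S x := Quotient.sound (hh x)
  have hblocks : 4 * S.classes.ncard ≤ k := by
    rw [← Nat.card_coe_set_eq, ← Nat.card_congr S.quotientEquivClasses,
      Nat.card_eq_fintype_card]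
    have h1 := two_mul_card_le_card_image_prod (Quotient.mk S) c Quotient.mk_surjective
      (hmk hfS) hcross
    have h2 := two_mul_card_image_prod_le_card (Quotient.mk S) c (hmk hgS) hg' hg.2
    simp only [Fintype.card_fin] at h2
    omega
  have hintervals : 4 * m ≤ k := by
    simpa using four_mul_card_le_card_of_even_fibers c hcs
      (fun i => even_card_of_involutive hg.1 hg.2 fun x hx => by simpa [hg'] using hx) hno
  omega

/-- with `θ` the partition of `{1,…,k}` into `m` consecutive intervals
(encoded as the kernel of a monotone surjection `c : Fin k → Fin m`), `π ∈ P₂(k)` with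
`π ∨ θ = 1_k`, `π' ∈ P₂(k)` with `π' ≤ θ` and `|π ∨ π'| = k/2 − m + 1`: if no block of
`π` is contained in a single interval of `θ`, then some interval `T_i` has exactly two
elements. -/
theorem exists_interval_of_size_two {k m : ℕ} (hk2 : 2 ≤ k) (hk : Even k)
    (c : Fin k → Fin m) (hc : Monotone c) (hcs : Function.Surjective c)
    (f g : Fin k → Fin k) (hf : IsPairing f) (hg : IsPairing g)
    (hjoin : genSetoid f ⊔ Setoid.ker c = ⊤)
    (hg' : ∀ x, c (g x) = c x)
    (hmax : (((genSetoid f ⊔ genSetoid g).classes.ncard : ℤ))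
      = ((k / 2 : ℕ) : ℤ) - (m : ℤ) + 1)
    (hcross : ∀ x, c (f x) ≠ c x) :
    ∃ i : Fin m, (Finset.univ.filter (fun x : Fin k => c x = i)).card = 2 :=
  exists_interval_of_size_two_general c hcs f g hg hg' hmax hcross
end
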